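/- If A is a differential K-algebra without exponents nor logarithm, then for every K-linear representation V of ℤ, the kernel of 1⊗∂ on V ⊗_K E_A equals V; and for every differential module M over A that is free as an A-module, the fixed points of 1⊗σ on M ⊗_A E_A equal M. -/

import Mathlib

set_option synthInstance.maxHeartbeats 1000000
set_option maxHeartbeats 1000000

open scoped TensorProduct
open Polynomial

noncomputable section

/-- `K[t,t⁻¹] → K[t^K]`: the inclusion of the Laurent polynomials (the group algebra
of `ℤ`) into the group algebra `K⟨K⟩ = K[t^K]` of the additive group `(K,+)`. -/
instance instLaurentToGrpAlg (K : Type) [Field K] :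
    Algebra (LaurentPolynomial K) (AddMonoidAlgebra K K) :=
  (AddMonoidAlgebra.mapDomainRingHom K (Int.castAddHom K)).toAlgebra

variable (K : Type) [Field K] [IsAlgClosed K] [CharZero K]
variable (A : Type) [CommRing A] [Algebra K A] [Algebra (LaurentPolynomial K) A]
  [IsScalarTower K (LaurentPolynomial K) A]

/-- `A[t^K] := A ⊗_{K[t,t⁻¹]} K[t^K]`. -/
abbrev AtK := A ⊗[LaurentPolynomial K] (AddMonoidAlgebra K K)

/-- The ring of exponents `E_A := A[t^K][ℓ]`. -/
abbrev EA := Polynomial (AtK K A)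

/-- The canonical inclusion `A → E_A`. -/
def iA : A →+* EA K A :=
  (Polynomial.C).comp (Algebra.TensorProduct.includeLeftRingHom)

/-- The element `t^a ∈ A[t^K] ⊆ E_A`, for `a ∈ K`. -/
def tpow (a : K) : EA K A :=
  Polynomial.C ((1:A) ⊗ₜ[LaurentPolynomial K] (AddMonoidAlgebra.single a 1))

/-- `t ∈ A`, the image of the Laurent variable. -/
def tA : A := algebraMap (LaurentPolynomial K) A (LaurentPolynomial.T 1)

variable {K A}

/-- `∂ : A → A` is a derivation extending `t·d/dt` on `K[t,t⁻¹]`: it kills the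
constants `K` and sends `t` to `t`. -/
def ExtendsTddt (dA : Derivation ℤ A A) : Prop :=
  (∀ c : K, dA (algebraMap K A c) = 0) ∧ dA (tA K A) = tA K A

/-- The characterizing properties of the derivation `∂` on `E_A`: it extends the
derivation `∂` of `A`, satisfies `∂(t^a) = a·t^a` for all `a ∈ K`, and `∂(ℓ) = 1`. -/
def DProps (dA : Derivation ℤ A A) (D : Derivation ℤ (EA K A) (EA K A)) : Prop :=
  (∀ x : A, D (iA K A x) = iA K A (dA x)) ∧
  (∀ a : K, D (tpow K A a) = a • tpow K A a) ∧
  D (Polynomial.X : EA K A) = 1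

/-- `γ : K → Kˣ` is a group homomorphism from `(K,+)` to `Kˣ` with kernel exactly
`ℤ` (induced by a choice of isomorphism `K/ℤ ≅ Kˣ`). -/
def GammaProps (γ : K → Kˣ) : Prop :=
  (∀ a b : K, γ (a + b) = γ a * γ b) ∧ (∀ a : K, γ a = 1 ↔ ∃ n : ℤ, (n : K) = a)

/-- The characterizing properties of the monodromy automorphism `σ` of `E_A`:
it fixes `A` pointwise, `σ(t^a) = γ(a)·t^a`, and `σ(ℓ) = ℓ + 1`. -/
def SProps (γ : K → Kˣ) (σ : EA K A ≃+* EA K A) : Prop :=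
  (∀ x : A, σ (iA K A x) = iA K A x) ∧
  (∀ a : K, σ (tpow K A a) = ((γ a : K) • tpow K A a)) ∧
  σ (Polynomial.X : EA K A) = Polynomial.X + 1

/-- `A` is a differential `K`-algebra without exponents nor logarithm:
`A^{∂²=0} = K` and `A^{∂+a=0} = 0` for every `a ∈ K` not in `ℤ`. -/
def NoExpLog (dA : Derivation ℤ A A) : Prop :=
  (∀ x : A, dA (dA x) = 0 ↔ ∃ c : K, x = algebraMap K A c) ∧
  (∀ a : K, (¬ ∃ n : ℤ, (n : K) = a) → ∀ x : A, dA x + a • x = 0 → x = 0)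

end

/-!
Choosing representatives `rep c` of the classes `c ∈ K/ℤ` (with `rep 0 = 0`), `K[t^K]` is free
over `K[t,t⁻¹]` on the `t^(rep c)`, so `A[t^K] = ⊕_c A·t^(rep c)`. On the summand of `c`, `∂` acts
as `∂_A + rep c` and `σ` as the scalar `γ (rep c)`. Since `rep c ∉ ℤ` for `c ≠ 0`, the absence of
exponents (resp. `γ (rep c) ≠ 1`) kills these summands in `ker ∂` (resp. in the fixed points of
`σ`); on the summand `c = 0` the absence of logarithms gives `ker ∂ = K` and shows that `∂ y ∈ K`
forces `∂ y = 0`, while `σ - 1` vanishes there. In `E_A = A[t^K][ℓ]` the relations `∂ℓ = 1`,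
`σℓ = ℓ + 1` make the coefficient below the leading one solve `∂ y = -n·lc` (resp.
`σ y - y = -n·lc`), so the leading coefficient vanishes unless the degree in `ℓ` is `0`. Hence
`0 → K → E_A → E_A` (with `∂`) and `0 → A → E_A → E_A` (with `σ - 1`) are exact, and they stay
exact after tensoring with the flat modules `V` and `M`.
-/

noncomputable section

section BaseChange

variable {R S N P : Type*} [CommRing R] [Ring S] [Algebra R S] [AddCommGroup N] [Module R N]
  [AddCommGroup P] [Module R P]

theorem TensorProduct.one_tmul_injective [Module.Flat R N]
    (h : Function.Injective (algebraMap R S)) :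
    Function.Injective fun n : N => (1 : S) ⊗ₜ[R] n := by
  have hcomp : (fun n : N => (1 : S) ⊗ₜ[R] n)
      = (Algebra.linearMap R S).rTensor N ∘ (TensorProduct.lid R N).symm := by
    ext n
    simp
  rw [hcomp]
  exact (Module.Flat.rTensor_preserves_injective_linearMap _ h).comp
    (TensorProduct.lid R N).symm.injective

theorem TensorProduct.rTensor_eq_zero_iff_exists_one_tmul [Module.Flat R N] {f : S →ₗ[R] P}
    (hf : Function.Exact (Algebra.linearMap R S) f) (w : S ⊗[R] N) :
    f.rTensor N w = 0 ↔ ∃ n : N, w = 1 ⊗ₜ n := by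
  rw [Module.Flat.rTensor_exact N hf w]
  constructor
  · rintro ⟨u, rfl⟩
    obtain ⟨n, rfl⟩ := (TensorProduct.lid R N).symm.surjective u
    exact ⟨n, by simp⟩
  · rintro ⟨n, rfl⟩
    exact ⟨1 ⊗ₜ n, by simp⟩

theorem TensorProduct.addMonoidHom_apply_eq_rTensor {M : Type*} [AddCommGroup M] [Module R M]
    {F : M ⊗[R] N →+ P ⊗[R] N} {f : M →ₗ[R] P} (hF : ∀ m n, F (m ⊗ₜ n) = f m ⊗ₜ n)
    (w : M ⊗[R] N) : F w = f.rTensor N w := by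
  induction w using TensorProduct.induction_on with
  | zero => simp
  | tmul m n => rw [hF, LinearMap.rTensor_tmul]
  | add x y hx hy => rw [map_add, map_add, hx, hy]

theorem TensorProduct.ker_eq_one_tmul [Module.Flat R N] {f : S →ₗ[R] P}
    (hf : Function.Exact (Algebra.linearMap R S) f) (hinj : Function.Injective (algebraMap R S))
    {F : S ⊗[R] N →+ P ⊗[R] N} (hF : ∀ s n, F (s ⊗ₜ n) = f s ⊗ₜ n) :
    (∀ w, F w = 0 ↔ ∃ n : N, w = 1 ⊗ₜ n) ∧ Function.Injective fun n : N => (1 : S) ⊗ₜ[R] n :=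
  ⟨fun w => by rw [addMonoidHom_apply_eq_rTensor hF, rTensor_eq_zero_iff_exists_one_tmul hf],
    one_tmul_injective hinj⟩

theorem TensorProduct.fixedPoints_eq_one_tmul [Module.Flat R N] {g : S →ₗ[R] S}
    (hg : ∀ s, g s = s ↔ ∃ r, algebraMap R S r = s) (hinj : Function.Injective (algebraMap R S))
    {G : S ⊗[R] N →+ S ⊗[R] N} (hG : ∀ s n, G (s ⊗ₜ n) = g s ⊗ₜ n) :
    (∀ w, G w = w ↔ ∃ n : N, w = 1 ⊗ₜ n) ∧ Function.Injective fun n : N => (1 : S) ⊗ₜ[R] n := by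
  let f : S →ₗ[R] S :=
    { toFun := fun s => g s - s
      map_add' := fun s t => by simp only [map_add]; abel
      map_smul' := fun r s => by simp only [map_smul, RingHom.id_apply, smul_sub] }
  have hexact : Function.Exact (Algebra.linearMap R S) f := fun s => sub_eq_zero.trans (hg s)
  obtain ⟨hker, hone⟩ := ker_eq_one_tmul hexact hinj (F := G - AddMonoidHom.id _) fun s n => by
    rw [AddMonoidHom.sub_apply, hG, AddMonoidHom.id_apply, ← sub_tmul]
    rfl
  exact ⟨fun w => sub_eq_zero.symm.trans (hker w), hone⟩

end BaseChange

theorem Polynomial.natDegree_eq_zero_of_coeff_succ {R : Type*} [Semiring R] {L : R → R}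
    (hL : ∀ (x y : R) (n : ℕ), L x = 0 → L y + (n + 1) • x = 0 → x = 0) {P : R[X]}
    (hP : ∀ n, P.natDegree = n + 1 →
      L (P.coeff (n + 1)) = 0 ∧ L (P.coeff n) + (n + 1) • P.coeff (n + 1) = 0) :
    P.natDegree = 0 := by
  by_contra h
  obtain ⟨n, hn⟩ := Nat.exists_eq_add_one_of_ne_zero h
  obtain ⟨htop, hsub⟩ := hP n hn
  have hlead := hL _ _ _ htop hsub
  rw [← hn, coeff_natDegree, leadingCoeff_eq_zero] at hlead
  exact h (by rw [hlead, natDegree_zero])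

namespace Finsupp

variable {ι M N : Type*} [AddCommMonoid M] [AddCommMonoid N]

def mapRangeIdx (τ : ι → M →+ N) : (ι →₀ M) →+ (ι →₀ N) :=
  liftAddHom fun i => (singleAddHom i).comp (τ i)

@[simp]
theorem mapRangeIdx_apply (τ : ι → M →+ N) (f : ι →₀ M) (i : ι) :
    mapRangeIdx τ f i = τ i (f i) := by
  classical
  induction f using Finsupp.induction_linear with
  | zero => simp
  | add f g hf hg => simp [hf, hg]
  | single j m => by_cases h : j = i <;> simp [mapRangeIdx, h]

@[simp]
theorem mapRangeIdx_single (τ : ι → M →+ N) (i : ι) (m : M) :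
    mapRangeIdx τ (single i m) = single i (τ i m) :=
  liftAddHom_apply_single _ _ _

end Finsupp

abbrev IntCoset (K : Type) [Field K] := K ⧸ (Int.castAddHom K).range

namespace IntCoset

variable {K : Type} [Field K]

open Classical in
def rep (c : IntCoset K) : K := if c = 0 then 0 else c.out

@[simp]
theorem mk_rep (c : IntCoset K) : ((rep c : K) : IntCoset K) = c := by
  unfold rep
  split_ifs with h
  · rw [h]; rfl
  · exact QuotientAddGroup.out_eq' c

@[simp]
theorem rep_zero : rep (0 : IntCoset K) = 0 := by
  simp [rep]

theorem mk_eq_zero_iff (a : K) : (a : IntCoset K) = 0 ↔ ∃ n : ℤ, (n : K) = a :=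
  QuotientAddGroup.eq_zero_iff a

theorem rep_not_int {c : IntCoset K} (hc : c ≠ 0) : ¬ ∃ n : ℤ, (n : K) = rep c := by
  rwa [← mk_eq_zero_iff, mk_rep]

theorem exists_int_add_rep (a : K) : ∃ n : ℤ, (n : K) + rep (a : IntCoset K) = a := by
  obtain ⟨n, hn⟩ := (mk_eq_zero_iff (a - rep (a : IntCoset K))).1 (by simp)
  exact ⟨n, by rw [hn]; ring⟩

@[simp]
theorem mk_int_add (n : ℤ) (a : K) : (((n : K) + a : K) : IntCoset K) = a := by
  rw [QuotientAddGroup.mk_add, (mk_eq_zero_iff _).2 ⟨n, rfl⟩, zero_add]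

def intPart (a : K) : ℤ := (exists_int_add_rep a).choose

@[simp]
theorem intPart_add_rep (a : K) : (intPart a : K) + rep (a : IntCoset K) = a :=
  (exists_int_add_rep a).choose_spec

theorem intPart_int_add_rep [CharZero K] (n : ℤ) (c : IntCoset K) :
    intPart ((n : K) + rep c) = n := by
  have h := intPart_add_rep ((n : K) + rep c)
  rw [mk_int_add, mk_rep, add_left_inj] at h
  exact_mod_cast h

end IntCoset

section ExpBasis

variable {K : Type} [Field K]

open IntCoset

theorem single_smul_single (m : ℤ) (a c k : K) :
    (AddMonoidAlgebra.single m c : LaurentPolynomial K) • AddMonoidAlgebra.single a k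
      = AddMonoidAlgebra.single ((m : K) + a) (c * k) := by
  rw [Algebra.smul_def]
  exact (congrArg (· * _) AddMonoidAlgebra.mapDomain_single).trans
    (AddMonoidAlgebra.single_mul_single ..)

variable (K) in
def toIntCosetCoeffs : AddMonoidAlgebra K K →+ (IntCoset K →₀ LaurentPolynomial K) :=
  (Finsupp.liftAddHom fun a : K => (Finsupp.singleAddHom (a : IntCoset K)).comp
    (AddMonoidAlgebra.singleAddHom (intPart a))).comp
    AddMonoidAlgebra.coeffAddEquiv.toAddMonoidHom

theorem toIntCosetCoeffs_single (a k : K) :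
    toIntCosetCoeffs K (AddMonoidAlgebra.single a k)
      = Finsupp.single (a : IntCoset K) (AddMonoidAlgebra.single (intPart a) k) :=
  Finsupp.liftAddHom_apply_single _ _ _

variable (K) in
def expBasis [CharZero K] :
    Module.Basis (IntCoset K) (LaurentPolynomial K) (AddMonoidAlgebra K K) :=
  .ofRepr <| LinearEquiv.symm
  { Finsupp.linearCombination (LaurentPolynomial K) fun c => AddMonoidAlgebra.single (rep c) 1 with
    invFun := toIntCosetCoeffs K
    left_inv := fun f => by
      induction f using Finsupp.induction_linear with
      | zero => simp
      | add f g hf hg => simp_all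
      | single c l =>
        induction l using AddMonoidAlgebra.induction_linear with
        | zero => simp
        | add l l' hl hl' => simp_all [Finsupp.single_add]
        | single n k =>
          simp only [AddHom.toFun_eq_coe, LinearMap.coe_toAddHom,
            Finsupp.linearCombination_single, single_smul_single, mul_one,
            toIntCosetCoeffs_single, mk_int_add, mk_rep, intPart_int_add_rep]
    right_inv := fun g => by
      induction g using AddMonoidAlgebra.induction_linear with
      | zero => simp
      | add g g' hg hg' => simp_all
      | single a k =>
        simp only [toIntCosetCoeffs_single, AddHom.toFun_eq_coe, LinearMap.coe_toAddHom,
          Finsupp.linearCombination_single, single_smul_single, mul_one, intPart_add_rep] }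

@[simp]
theorem expBasis_apply [CharZero K] (c : IntCoset K) :
    expBasis K c = AddMonoidAlgebra.single (rep c) 1 := by
  simp [expBasis]

end ExpBasis

namespace AtK

open IntCoset

variable {K : Type} [Field K] [CharZero K] {A : Type} [CommRing A]
  [Algebra (LaurentPolynomial K) A]

variable (K A) in
def basis : Module.Basis (IntCoset K) A (AtK K A) := Algebra.TensorProduct.basis A (expBasis K)

theorem basis_repr_symm_single (c : IntCoset K) (z : A) :
    (basis K A).repr.symm (Finsupp.single c z) = z ⊗ₜ AddMonoidAlgebra.single (rep c) 1 := by
  rw [Module.Basis.repr_symm_single, basis, Algebra.TensorProduct.basis_repr_symm_apply',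
    expBasis_apply]

theorem basis_repr_algebraMap (z : A) :
    (basis K A).repr (algebraMap A (AtK K A) z) = Finsupp.single 0 z := by
  have h : algebraMap A (AtK K A) z = (basis K A).repr.symm (Finsupp.single 0 z) := by
    rw [basis_repr_symm_single, rep_zero]
    rfl
  rw [h, LinearEquiv.apply_symm_apply]

theorem eq_algebraMap_of_repr_eq_zero {y : AtK K A} (hy : ∀ c ≠ 0, (basis K A).repr y c = 0) :
    y = algebraMap A (AtK K A) ((basis K A).repr y 0) := by
  apply (basis K A).repr.injective
  rw [basis_repr_algebraMap]
  ext c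
  by_cases hc : c = 0
  · rw [hc, Finsupp.single_eq_same]
  · rw [Finsupp.single_eq_of_ne hc, hy c hc]

def diagonalMap (τ : IntCoset K → A →+ A) : AtK K A →+ AtK K A :=
  (basis K A).repr.symm.toAddMonoidHom.comp
    ((Finsupp.mapRangeIdx τ).comp (basis K A).repr.toAddMonoidHom)

@[simp]
theorem basis_repr_diagonalMap (τ : IntCoset K → A →+ A) (y : AtK K A) (c : IntCoset K) :
    (basis K A).repr (diagonalMap τ y) c = τ c ((basis K A).repr y c) := by
  simp [diagonalMap]

theorem map_C_eq_C_diagonalMap {τ : IntCoset K → A →+ A} (T : EA K A →+ EA K A)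
    (hT : ∀ c z, T (C (z ⊗ₜ AddMonoidAlgebra.single (rep c) 1))
      = C (τ c z ⊗ₜ AddMonoidAlgebra.single (rep c) 1)) (y : AtK K A) :
    T (C y) = C (diagonalMap τ y) := by
  obtain ⟨f, rfl⟩ := (basis K A).repr.symm.surjective y
  induction f using Finsupp.induction_linear with
  | zero => simp
  | add f g hf hg => simp only [map_add, hf, hg]
  | single c z =>
    have h : diagonalMap τ ((basis K A).repr.symm (Finsupp.single c z))
        = (basis K A).repr.symm (Finsupp.single c (τ c z)) := by
      simp [diagonalMap]
    rw [h, basis_repr_symm_single, basis_repr_symm_single, hT]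

end AtK

theorem EA.algebraMap_injective {K : Type} [Field K] [CharZero K] {A : Type} [CommRing A]
    [Algebra (LaurentPolynomial K) A] : Function.Injective (algebraMap A (EA K A)) :=
  C_injective.comp fun x y h => by
    simpa only [AtK.basis_repr_algebraMap, Finsupp.single_eq_same]
      using congrArg (fun y => (AtK.basis K A).repr y 0) h

namespace AtK

open IntCoset

variable {K : Type} [Field K] [CharZero K] {A : Type} [CommRing A] [Algebra K A]
  [Algebra (LaurentPolynomial K) A]

def derivation (dA : Derivation ℤ A A) : AtK K A →+ AtK K A :=
  diagonalMap fun c => (dA : A →+ A) + rep c • AddMonoidHom.id A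

def monodromy (γ : K → Kˣ) : AtK K A →+ AtK K A :=
  diagonalMap fun c => (γ (rep c) : K) • AddMonoidHom.id A

theorem basis_repr_derivation (dA : Derivation ℤ A A) (y : AtK K A) (c : IntCoset K) :
    (basis K A).repr (derivation dA y) c
      = dA ((basis K A).repr y c) + rep c • (basis K A).repr y c := by
  simp [derivation]

theorem basis_repr_monodromy (γ : K → Kˣ) (y : AtK K A) (c : IntCoset K) :
    (basis K A).repr (monodromy γ y) c = (γ (rep c) : K) • (basis K A).repr y c := by
  simp [monodromy]

variable {γ : K → Kˣ}

theorem exists_eq_algebraMap_of_monodromy_eq_self (hγ : ∀ a : K, γ a = 1 ↔ ∃ n : ℤ, (n : K) = a)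
    {y : AtK K A} (hy : monodromy γ y = y) : ∃ z : A, y = algebraMap A (AtK K A) z := by
  have hf (c : IntCoset K) : (γ (rep c) : K) • (basis K A).repr y c = (basis K A).repr y c := by
    rw [← basis_repr_monodromy, hy]
  have hzero (c : IntCoset K) (hc : c ≠ 0) : (basis K A).repr y c = 0 := by
    have hne : (γ (rep c) : K) - 1 ≠ 0 := fun h =>
      rep_not_int hc ((hγ _).1 (Units.val_eq_one.1 (sub_eq_zero.1 h)))
    exact (smul_eq_zero.1 (by rw [sub_smul, one_smul, hf, sub_self])).resolve_left hne
  exact ⟨_, eq_algebraMap_of_repr_eq_zero hzero⟩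

theorem eq_zero_of_monodromy_sub_add_nsmul_eq_zero
    (hγ : ∀ a : K, γ a = 1 ↔ ∃ n : ℤ, (n : K) = a) {x y : AtK K A} {n : ℕ}
    (hx : monodromy γ x = x) (hy : monodromy γ y - y + (n + 1) • x = 0) : x = 0 := by
  obtain ⟨z, rfl⟩ := exists_eq_algebraMap_of_monodromy_eq_self hγ hx
  rw [← map_nsmul] at hy
  have hγ0 : γ 0 = 1 := (hγ 0).2 ⟨0, Int.cast_zero⟩
  have h0 : (n + 1) • z = 0 := by
    simpa only [map_add, map_sub, Finsupp.add_apply, Finsupp.sub_apply, basis_repr_monodromy,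
      rep_zero, hγ0, Units.val_one, one_smul, sub_self, zero_add, basis_repr_algebraMap,
      Finsupp.single_eq_same, map_zero, Finsupp.zero_apply]
      using congrArg (fun y => (basis K A).repr y 0) hy
  have := IsAddTorsionFree.of_isTorsionFree K A
  rw [(smul_eq_zero.1 h0).resolve_left n.succ_ne_zero, map_zero]

variable [IsScalarTower K (LaurentPolynomial K) A] {dA : Derivation ℤ A A}

theorem exists_eq_algebraMap_of_derivation_eq_zero (hN : NoExpLog (K := K) dA) {y : AtK K A}
    (hy : derivation dA y = 0) : ∃ k : K, y = algebraMap K (AtK K A) k := by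
  have hf (c : IntCoset K) : dA ((basis K A).repr y c) + rep c • (basis K A).repr y c = 0 := by
    rw [← basis_repr_derivation, hy, map_zero, Finsupp.zero_apply]
  have hzero (c : IntCoset K) (hc : c ≠ 0) : (basis K A).repr y c = 0 :=
    hN.2 _ (rep_not_int hc) _ (hf c)
  have hconst : dA (dA ((basis K A).repr y 0)) = 0 := by
    simpa using congrArg dA (hf 0)
  obtain ⟨k, hk⟩ := (hN.1 _).1 hconst
  exact ⟨k, by rw [eq_algebraMap_of_repr_eq_zero hzero, hk, ← IsScalarTower.algebraMap_apply]⟩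

theorem eq_zero_of_derivation_add_nsmul_eq_zero (hdA : ∀ k : K, dA (algebraMap K A k) = 0)
    (hN : NoExpLog (K := K) dA) {x y : AtK K A} {n : ℕ} (hx : derivation dA x = 0)
    (hy : derivation dA y + (n + 1) • x = 0) : x = 0 := by
  obtain ⟨k, rfl⟩ := exists_eq_algebraMap_of_derivation_eq_zero hN hx
  rw [IsScalarTower.algebraMap_apply K A (AtK K A)] at hy ⊢
  rw [← map_nsmul] at hy
  have h0 : dA ((basis K A).repr y 0) + (n + 1) • algebraMap K A k = 0 := by
    simpa only [map_add, Finsupp.add_apply, basis_repr_derivation, rep_zero, zero_smul, add_zero,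
      basis_repr_algebraMap, Finsupp.single_eq_same, map_zero, Finsupp.zero_apply]
      using congrArg (fun y => (basis K A).repr y 0) hy
  -- `∂²` kills the `0`-component of `y`, so it is a constant and `∂` of it vanishes.
  obtain ⟨k', hk'⟩ := (hN.1 _).1 (by simpa [hdA] using congrArg dA h0)
  rw [hk', hdA, zero_add] at h0
  have := IsAddTorsionFree.of_isTorsionFree K A
  rw [(smul_eq_zero.1 h0).resolve_left n.succ_ne_zero, map_zero]

end AtK

section

variable {K : Type} [Field K] {A : Type} [CommRing A] [Algebra (LaurentPolynomial K) A]

theorem C_tmul_single (z : A) (b : K) :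
    (C (z ⊗ₜ AddMonoidAlgebra.single b 1) : EA K A) = iA K A z * tpow K A b := by
  rw [iA, tpow, RingHom.comp_apply, ← map_mul, Algebra.TensorProduct.includeLeftRingHom_apply,
    Algebra.TensorProduct.tmul_mul_tmul, mul_one, one_mul]

theorem iA_smul [Algebra K A] (k : K) (z : A) : iA K A (k • z) = k • iA K A z := by
  rw [Algebra.smul_def, map_mul, Algebra.smul_def]
  rfl

variable [Algebra K A] [IsScalarTower K (LaurentPolynomial K) A] {dA : Derivation ℤ A A}
  {D : Derivation ℤ (EA K A) (EA K A)} {γ : K → Kˣ} {σ : EA K A ≃+* EA K A}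

theorem DProps.algebraMap_eq_zero (hdA : ∀ k : K, dA (algebraMap K A k) = 0) (hD : DProps dA D)
    (k : K) : D (algebraMap K (EA K A) k) = 0 :=
  (hD.1 (algebraMap K A k)).trans (by rw [hdA, map_zero])

theorem DProps.map_smul (hdA : ∀ k : K, dA (algebraMap K A k) = 0) (hD : DProps dA D)
    (k : K) (e : EA K A) : D (k • e) = k • D e := by
  rw [Algebra.smul_def, Derivation.leibniz, hD.algebraMap_eq_zero hdA, smul_zero, add_zero,
    smul_eq_mul, ← Algebra.smul_def]

theorem SProps.map_smul (hσ : SProps γ σ) (a : A) (e : EA K A) : σ (a • e) = a • σ e := by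
  rw [Algebra.smul_def, map_mul, Algebra.smul_def a]
  exact congrArg (· * σ e) (hσ.1 a)

variable [CharZero K]

theorem DProps.map_C (hD : DProps dA D) (y : AtK K A) : D (C y) = C (AtK.derivation dA y) := by
  refine AtK.map_C_eq_C_diagonalMap (D : EA K A →+ EA K A) (fun c z => ?_) y
  simp only [AddMonoidHom.coe_coe, C_tmul_single, Derivation.leibniz, hD.1, hD.2.1,
    AddMonoidHom.add_apply, AddMonoidHom.smul_apply, AddMonoidHom.id_apply, map_add, add_mul,
    iA_smul, smul_eq_mul, mul_smul_comm, smul_mul_assoc]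
  ring

theorem SProps.map_C (hσ : SProps γ σ) (y : AtK K A) : σ (C y) = C (AtK.monodromy γ y) := by
  refine AtK.map_C_eq_C_diagonalMap (σ : EA K A →+ EA K A) (fun c z => ?_) y
  simp only [AddMonoidHom.coe_coe, C_tmul_single, map_mul, hσ.1, hσ.2.1,
    AddMonoidHom.smul_apply, AddMonoidHom.id_apply, iA_smul, mul_smul_comm, smul_mul_assoc]

theorem DProps.coeff_apply (hD : DProps dA D) (P : EA K A) (j : ℕ) :
    (D P).coeff j = AtK.derivation dA (P.coeff j) + (j + 1) • P.coeff (j + 1) := by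
  induction P using Polynomial.induction_on' with
  | add p q hp hq =>
    simp only [map_add, coeff_add, hp, hq, smul_add]
    abel
  | monomial n y =>
    have hmono :
        D (monomial n y) = monomial n (AtK.derivation dA y) + monomial (n - 1) (n • y) := by
      rw [← C_mul_X_pow_eq_monomial, Derivation.leibniz, Derivation.leibniz_pow, hD.2.2, hD.map_C]
      simp only [smul_eq_mul, mul_one, ← C_mul_X_pow_eq_monomial, nsmul_eq_mul, C_mul,
        C_eq_natCast]
      ring
    rw [hmono, coeff_add, coeff_monomial, coeff_monomial, coeff_monomial, coeff_monomial]
    split_ifs <;> try omega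
    · obtain rfl : n = 0 := by omega
      simp
    · simp
    · obtain rfl : n = j + 1 := by omega
      simp
    · simp

theorem SProps.coeff_apply (hσ : SProps γ σ) (P : EA K A) (m : ℕ) :
    (σ P).coeff m
      = ∑ j ∈ Finset.range (P.natDegree + 1), j.choose m • AtK.monodromy γ (P.coeff j) := by
  conv_lhs => rw [P.as_sum_range_C_mul_X_pow]
  simp only [map_sum, map_mul, map_pow, hσ.map_C, hσ.2.2, finsetSum_coeff, coeff_C_mul,
    coeff_X_add_one_pow, nsmul_eq_mul, Nat.cast_comm]

theorem SProps.coeff_natDegree (hσ : SProps γ σ) {P : EA K A} {n : ℕ}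
    (hP : P.natDegree = n + 1) :
    (σ P).coeff (n + 1) = AtK.monodromy γ (P.coeff (n + 1)) ∧
    (σ P).coeff n = AtK.monodromy γ (P.coeff n) + (n + 1) • AtK.monodromy γ (P.coeff (n + 1)) := by
  have hlow : ∀ m, ∀ j ∈ Finset.range m, j.choose m • AtK.monodromy γ (P.coeff j) = 0 := by
    intro m j hj
    rw [Nat.choose_eq_zero_of_lt (Finset.mem_range.1 hj), zero_smul]
  rw [hσ.coeff_apply, hσ.coeff_apply, hP, Finset.sum_range_succ, Finset.sum_eq_zero (hlow _),
    Finset.sum_range_succ, Finset.sum_range_succ, Finset.sum_eq_zero (hlow _)]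
  simp [Nat.choose_succ_self_right]

theorem DProps.eq_zero_iff (hdA : ∀ k : K, dA (algebraMap K A k) = 0)
    (hN : NoExpLog (K := K) dA) (hD : DProps dA D) (P : EA K A) :
    D P = 0 ↔ ∃ k : K, algebraMap K (EA K A) k = P := by
  constructor
  · intro h
    have hcoeff (j : ℕ) : AtK.derivation dA (P.coeff j) + (j + 1) • P.coeff (j + 1) = 0 := by
      rw [← hD.coeff_apply, h, coeff_zero]
    have hdeg : P.natDegree = 0 := by
      refine natDegree_eq_zero_of_coeff_succ
        (fun x y n => AtK.eq_zero_of_derivation_add_nsmul_eq_zero hdA hN)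
        fun n hn => ⟨?_, hcoeff n⟩
      simpa [coeff_eq_zero_of_natDegree_lt (show P.natDegree < n + 1 + 1 by omega)]
        using hcoeff (n + 1)
    obtain ⟨k, hk⟩ := AtK.exists_eq_algebraMap_of_derivation_eq_zero hN (y := P.coeff 0)
      (by simpa [coeff_eq_zero_of_natDegree_lt (show P.natDegree < 1 by omega)] using hcoeff 0)
    exact ⟨k, by rw [eq_C_of_natDegree_eq_zero hdeg, hk]; rfl⟩
  · rintro ⟨k, rfl⟩
    exact hD.algebraMap_eq_zero hdA k

theorem SProps.apply_eq_self_iff (hγ : ∀ a : K, γ a = 1 ↔ ∃ n : ℤ, (n : K) = a)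
    (hσ : SProps γ σ) (P : EA K A) : σ P = P ↔ ∃ z : A, algebraMap A (EA K A) z = P := by
  constructor
  · intro h
    have hdeg : P.natDegree = 0 := by
      refine natDegree_eq_zero_of_coeff_succ (L := fun y => AtK.monodromy γ y - y)
        (fun x y n hx => AtK.eq_zero_of_monodromy_sub_add_nsmul_eq_zero hγ (sub_eq_zero.1 hx))
        fun n hn => ?_
      obtain ⟨htop, hsub⟩ := hσ.coeff_natDegree hn
      rw [h] at htop hsub
      refine ⟨sub_eq_zero.2 htop.symm, ?_⟩
      rw [← htop] at hsub
      rw [sub_add_eq_add_sub, sub_eq_zero, ← hsub]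
    have hfix : AtK.monodromy γ (P.coeff 0) = P.coeff 0 := by
      rw [← C_inj, ← hσ.map_C, ← eq_C_of_natDegree_eq_zero hdeg, h]
    obtain ⟨z, hz⟩ := AtK.exists_eq_algebraMap_of_monodromy_eq_self hγ hfix
    exact ⟨z, by rw [eq_C_of_natDegree_eq_zero hdeg, hz]; rfl⟩
  · rintro ⟨z, rfl⟩
    exact hσ.1 z

theorem DProps.ker_tensor [Nontrivial A] (hdA : ∀ k : K, dA (algebraMap K A k) = 0)
    (hN : NoExpLog (K := K) dA) (hD : DProps dA D) {V : Type} [AddCommGroup V] [Module K V]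
    {DW : EA K A ⊗[K] V →+ EA K A ⊗[K] V} (hDW : ∀ x v, DW (x ⊗ₜ[K] v) = D x ⊗ₜ[K] v) :
    (∀ w, DW w = 0 ↔ ∃ v : V, w = 1 ⊗ₜ[K] v) ∧
      Function.Injective fun v : V => (1 : EA K A) ⊗ₜ[K] v :=
  have : Nontrivial (EA K A) := EA.algebraMap_injective.nontrivial
  TensorProduct.ker_eq_one_tmul (R := K) (f := ⟨⟨D, map_add D⟩, hD.map_smul hdA⟩)
    (fun e => by exact hD.eq_zero_iff hdA hN e) (algebraMap K (EA K A)).injective hDW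

theorem SProps.fixedPoints_tensor (hγ : ∀ a : K, γ a = 1 ↔ ∃ n : ℤ, (n : K) = a)
    (hσ : SProps γ σ) {M : Type} [AddCommGroup M] [Module A M] [Module.Free A M]
    {σM : EA K A ⊗[A] M →+ EA K A ⊗[A] M} (hσM : ∀ x m, σM (x ⊗ₜ[A] m) = σ x ⊗ₜ[A] m) :
    (∀ w, σM w = w ↔ ∃ m : M, w = 1 ⊗ₜ[A] m) ∧
      Function.Injective fun m : M => (1 : EA K A) ⊗ₜ[A] m :=
  TensorProduct.fixedPoints_eq_one_tmul (g := ⟨⟨σ, map_add σ⟩, hσ.map_smul⟩)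
    (hσ.apply_eq_self_iff hγ) (EA.algebraMap_injective (K := K)) hσM

end

theorem stmt_16_general (K : Type) [Field K] [CharZero K]
    (A : Type) [CommRing A] [Algebra K A] [Algebra (LaurentPolynomial K) A]
    [IsScalarTower K (LaurentPolynomial K) A]
    (hinj : Function.Injective (algebraMap (LaurentPolynomial K) A))
    (dA : Derivation ℤ A A) (hdA : ExtendsTddt (K := K) dA)
    (hNoExpLog : NoExpLog (K := K) dA)
    (γ : K → Kˣ) (hγ : GammaProps γ)
    (D : Derivation ℤ (EA K A) (EA K A)) (hD : DProps (K := K) dA D)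
    (σ : EA K A ≃+* EA K A) (hσ : SProps γ σ)
    -- a `K`-linear representation `V` of `ℤ`
    (V : Type) [AddCommGroup V] [Module K V]
    -- the connection `1 ⊗ ∂` on `V ⊗_K E_A`
    (DW : (EA K A ⊗[K] V) →+ (EA K A ⊗[K] V))
    (hDW : ∀ (x : EA K A) (v : V), DW (x ⊗ₜ[K] v) = D x ⊗ₜ[K] v)
    -- a differential module `M` over `A`, free as an `A`-module
    (M : Type) [AddCommGroup M] [Module A M] [Module.Free A M]
    -- the semi-linear automorphism `1 ⊗ σ` on `M ⊗_A E_A`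
    (σM : (EA K A ⊗[A] M) →+ (EA K A ⊗[A] M))
    (hσM : ∀ (x : EA K A) (m : M), σM (x ⊗ₜ[A] m) = σ x ⊗ₜ[A] m) :
    -- `(V ⊗_K E_A)^{1⊗∂ = 0} = V`
    ((∀ w : EA K A ⊗[K] V, DW w = 0 ↔ ∃ v : V, w = (1 : EA K A) ⊗ₜ[K] v) ∧
      Function.Injective (fun v : V => (1 : EA K A) ⊗ₜ[K] v)) ∧
    -- `(M ⊗_A E_A)^{1⊗σ = 1} = M`
    ((∀ w : EA K A ⊗[A] M, σM w = w ↔ ∃ m : M, w = (1 : EA K A) ⊗ₜ[A] m) ∧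
      Function.Injective (fun m : M => (1 : EA K A) ⊗ₜ[A] m)) := by
  have : Nontrivial A := hinj.nontrivial
  exact ⟨hD.ker_tensor hdA.1 hNoExpLog hDW, hσ.fixedPoints_tensor hγ.2 hσM⟩

/-- If `A` is a differential `K`-algebra without exponents nor
logarithm, then for every `K`-linear representation `V` of `ℤ` the kernel of
`1 ⊗ ∂` on `V ⊗_K E_A` equals `V`; and for every differential module `M` over `A`
that is free as an `A`-module, the fixed points of `1 ⊗ σ` on `M ⊗_A E_A`
equal `M`. -/
theorem stmt_16 (K : Type) [Field K] [IsAlgClosed K] [CharZero K]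
    (A : Type) [CommRing A] [Algebra K A] [Algebra (LaurentPolynomial K) A]
    [IsScalarTower K (LaurentPolynomial K) A]
    (hinj : Function.Injective (algebraMap (LaurentPolynomial K) A))
    (dA : Derivation ℤ A A) (hdA : ExtendsTddt (K := K) dA)
    (hNoExpLog : NoExpLog (K := K) dA)
    (γ : K → Kˣ) (hγ : GammaProps γ)
    (D : Derivation ℤ (EA K A) (EA K A)) (hD : DProps (K := K) dA D)
    (σ : EA K A ≃+* EA K A) (hσ : SProps γ σ)
    -- a `K`-linear representation `V` of `ℤ`
    (V : Type) [AddCommGroup V] [Module K V] (u : V ≃ₗ[K] V)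
    -- the connection `1 ⊗ ∂` on `V ⊗_K E_A`
    (DW : (EA K A ⊗[K] V) →+ (EA K A ⊗[K] V))
    (hDW : ∀ (x : EA K A) (v : V), DW (x ⊗ₜ[K] v) = D x ⊗ₜ[K] v)
    -- a differential module `M` over `A`, free as an `A`-module
    (M : Type) [AddCommGroup M] [Module A M] [Module.Free A M]
    (nM : M →+ M) (hnM : ∀ (f : A) (m : M), nM (f • m) = dA f • m + f • nM m)
    -- the semi-linear automorphism `1 ⊗ σ` on `M ⊗_A E_A`
    (σM : (EA K A ⊗[A] M) →+ (EA K A ⊗[A] M))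
    (hσM : ∀ (x : EA K A) (m : M), σM (x ⊗ₜ[A] m) = σ x ⊗ₜ[A] m) :
    -- `(V ⊗_K E_A)^{1⊗∂ = 0} = V`
    ((∀ w : EA K A ⊗[K] V, DW w = 0 ↔ ∃ v : V, w = (1 : EA K A) ⊗ₜ[K] v) ∧
      Function.Injective (fun v : V => (1 : EA K A) ⊗ₜ[K] v)) ∧
    -- `(M ⊗_A E_A)^{1⊗σ = 1} = M`
    ((∀ w : EA K A ⊗[A] M, σM w = w ↔ ∃ m : M, w = (1 : EA K A) ⊗ₜ[A] m) ∧
      Function.Injective (fun m : M => (1 : EA K A) ⊗ₜ[A] m)) :=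
  stmt_16_general K A hinj dA hdA hNoExpLog γ hγ D hD σ hσ V DW hDW M σM hσM

end
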